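/- Summing over k: for x ≥ 16 and f multiplicative with |f| ≤ 1, |S(x)| ≪ (1/log x) ∑_{k=1}^{K} |S_k(x)| + x (log log x)/log x, where K = ⌈log log x⌉ + O(1) is the largest k with P_k nonempty, S_k as above. -/

import Mathlib

/-!
Write `S(y) = ∑_{n ≤ y} f(n)`. Since `log = 1 * Λ` and `f(qm) = f(q) f(m)` unless `q ∣ m`,
Chebyshev's identity `S(y) log y = ∑_{q ≤ y} f(q) log q · S(y/q) + O(y)` holds, with the
error controlled by `∑_p log p / p² < ∞`. Apply it at `y = x`. By Mertens' estimate
`∑_{p ≤ y} log p / p = log y + O(1)` the primes `p ≤ (log x)^4` contribute `O(x log log x)`,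
and by Chebyshev's bound `θ(x) ≪ x` so do the primes `p > x/2`. The remaining primes fall into
the blocks `P_k`, on which `log(x/p) ≥ e^{-k} log x`. Applying the identity again at `y = x/p`
and weighting by `f(p) log p / log(x/p)` turns the contribution of `P_k` into `S_k(x)` up to an
error `≪ (x e^k / log x) ∑_{p ∈ P_k} log p / p ≪ x`, by Mertens again. There are
`O(log log x)` blocks.
-/

open Finset MeasureTheory
open scoped Classical BigOperators

/-- The primes `p ≤ y`. -/
noncomputable def primesUpTo (y : ℝ) : Finset ℕ :=
  (Finset.Icc 1 ⌊y⌋₊).filter Nat.Prime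

/-- The truncated Euler product `F_x(s) = ∏_{p ≤ x} (1 + ∑_{k ≥ 1} f(p^k) p^{-ks})`. -/
noncomputable def Fx (f : ℕ → ℂ) (x : ℝ) (s : ℂ) : ℂ :=
  ∏ p ∈ primesUpTo x, (1 + ∑' k : ℕ, f (p ^ (k + 1)) / (p : ℂ) ^ (((k : ℂ) + 1) * s))

/-- `L(x)² = ∑_{|N| ≤ (log x)² + 1} (N²+1)⁻¹ sup_{|t-N| ≤ 1/2} |F_x(1+it)|²`. -/
noncomputable def Lsq (f : ℕ → ℂ) (x : ℝ) : ℝ :=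
  ∑ N ∈ Finset.Icc (-⌊(Real.log x) ^ 2 + 1⌋) ⌊(Real.log x) ^ 2 + 1⌋,
    (1 / ((N : ℝ) ^ 2 + 1)) *
      sSup ((fun t : ℝ => ‖Fx f x (1 + t * Complex.I)‖ ^ 2) ''
        Set.Icc ((N : ℝ) - 1 / 2) ((N : ℝ) + 1 / 2))

/-- The set `P_k` of primes `p` with `(log x)^4 < p ≤ x/2` and
`x^{1-e^{1-k}} < p ≤ x^{1-e^{-k}}`. -/
noncomputable def Pk (x : ℝ) (k : ℕ) : Finset ℕ :=
  (Finset.Icc 1 ⌊x⌋₊).filter (fun p => p.Prime ∧ (Real.log x) ^ 4 < (p : ℝ) ∧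
    (p : ℝ) ≤ x / 2 ∧ x ^ (1 - Real.exp (1 - (k : ℝ))) < (p : ℝ) ∧
    (p : ℝ) ≤ x ^ (1 - Real.exp (-(k : ℝ))))

/-- The triple convolution sum `S_k(x)`. -/
noncomputable def Sk (f : ℕ → ℂ) (x : ℝ) (k : ℕ) : ℂ :=
  ∑ p ∈ Pk x k, ∑ q ∈ primesUpTo (x / p), ∑ n ∈ Finset.Icc 1 ⌊x / (p * q)⌋₊,
    (f p * (Real.log p : ℂ) / (Real.log (x / p) : ℂ)) * f n * f q * (Real.log q : ℂ)

open Real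
open ArithmeticFunction hiding log

/-! ## Chebyshev and Mertens estimates -/

lemma log_four_lt_three_halves : log 4 < 3 / 2 := by
  rw [show (4 : ℝ) = 2 ^ 2 by norm_num, log_pow]
  have := log_two_lt_d9
  push_cast
  linarith

lemma neg_log_log_two_le_one : -log (log 2) ≤ 1 := by
  have hlog2 : exp (-1) ≤ log 2 := by
    rw [exp_neg, ← one_div, div_le_iff₀ (exp_pos 1)]
    nlinarith [log_two_gt_d9, exp_one_gt_d9]
  linarith [log_le_log (exp_pos _) hlog2, log_exp (-1)]

lemma exp_one_le_log {x : ℝ} (hx : 16 ≤ x) : exp 1 ≤ log x := by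
  have h16 : log 16 = 4 * log 2 := by
    rw [show (16 : ℝ) = 2 ^ 4 by norm_num, log_pow]; norm_num
  linarith [log_le_log (by norm_num) hx, log_two_gt_d9, exp_one_lt_d9]

lemma one_le_log_log {x : ℝ} (hx : 16 ≤ x) : 1 ≤ log (log x) := by
  rw [le_log_iff_exp_le ((exp_pos 1).trans_le (exp_one_le_log hx))]
  exact exp_one_le_log hx

lemma sum_Icc_log_div_mul_sub_one_le (N : ℕ) :
    ∑ n ∈ Icc 2 N, log n / (n * (n - 1)) ≤ 2 := by
  -- telescoping against `(log n + 2) / n`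
  suffices h : ∀ N : ℕ, 1 ≤ N →
      ∑ n ∈ Icc 2 N, log n / (n * (n - 1)) ≤ 2 - (log N + 2) / N by
    rcases N.eq_zero_or_pos with rfl | hN
    · simp
    · have : 0 ≤ (log N + 2) / N := by have := log_natCast_nonneg N; positivity
      linarith [h N hN]
  intro N hN
  induction N, hN using Nat.le_induction with
  | base => simp
  | succ N hN ih =>
    rw [sum_Icc_succ_top (by omega)]
    have hN' : (1 : ℝ) ≤ N := by exact_mod_cast hN
    have hlog : log (N + 1) - log N ≤ 1 / N := by
      rw [← log_div (by positivity) (by positivity)]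
      calc log ((N + 1) / N) ≤ (N + 1) / N - 1 := log_le_sub_one_of_pos (by positivity)
        _ = 1 / N := by field_simp; ring
    have hstep : ((N : ℝ) + 1) * (log (N + 1) - log N) ≤ 2 := by
      have h1 : (N : ℝ) * (log (N + 1) - log N) ≤ 1 := by
        rwa [le_div_iff₀ (by positivity), mul_comm] at hlog
      have h2 : log (N + 1) - log N ≤ 1 :=
        hlog.trans (div_le_one_of_le₀ hN' (by positivity))
      linarith
    have hdiff : (log N + 2) / N - (log (N + 1) + 2) / (N + 1)
        - log (N + 1) / ((N + 1) * (N + 1 - 1))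
        = (2 - (N + 1) * (log (N + 1) - log N)) / (N * (N + 1)) := by
      rw [add_sub_cancel_right]; field_simp; ring
    have : 0 ≤ (2 - ((N : ℝ) + 1) * (log (N + 1) - log N)) / (N * (N + 1)) :=
      div_nonneg (by linarith) (by positivity)
    push_cast
    linarith

lemma sum_Icc_two_inv_pow_le {r : ℝ} (hr : 1 < r) (K : ℕ) :
    ∑ k ∈ Icc 2 K, 1 / r ^ k ≤ 1 / (r * (r - 1)) := by
  have hr0 : 0 < r := by linarith
  calc ∑ k ∈ Icc 2 K, 1 / r ^ k = ∑ k ∈ Ico 2 (K + 1), r⁻¹ ^ k := by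
        rw [← Finset.Ico_add_one_right_eq_Icc]; simp [inv_pow]
    _ ≤ r⁻¹ ^ 2 / (1 - r⁻¹) :=
        geom_sum_Ico_le_of_lt_one (by positivity) (inv_lt_one_of_one_lt₀ hr)
    _ = 1 / (r * (r - 1)) := by field_simp

lemma sum_primes_log_div_mul_sub_one_le (N : ℕ) :
    ∑ p ∈ Icc 1 N with p.Prime, log p / (p * (p - 1)) ≤ 2 := by
  refine le_trans (sum_le_sum_of_subset_of_nonneg (fun p hp => ?_) fun n hn _ => ?_)
    (sum_Icc_log_div_mul_sub_one_le N)
  · simp only [mem_filter, mem_Icc] at hp ⊢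
    exact ⟨hp.2.two_le, hp.1.2⟩
  · have : (2 : ℝ) ≤ n := by exact_mod_cast (mem_Icc.1 hn).1
    exact div_nonneg (log_natCast_nonneg n) (by nlinarith)

lemma sum_Icc_log_eq_log_factorial (N : ℕ) : ∑ m ∈ Icc 1 N, log m = log N.factorial := by
  rw [← Finset.prod_Ico_id_eq_factorial, Finset.Ico_add_one_right_eq_Icc, Nat.cast_prod,
    log_prod fun m hm => by have := (mem_Icc.1 hm).1; positivity]

lemma sum_Icc_log_le (N : ℕ) : ∑ m ∈ Icc 1 N, log m ≤ N * log N := by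
  rw [sum_Icc_log_eq_log_factorial, ← log_pow]
  exact log_le_log (by positivity) (by exact_mod_cast N.factorial_le_pow)

lemma mul_log_sub_le_sum_Icc_log (N : ℕ) : N * log N - N ≤ ∑ m ∈ Icc 1 N, log m := by
  rcases N.eq_zero_or_pos with rfl | hN
  · simp
  have h : (N : ℝ) ^ N ≤ N.factorial * exp N := by
    have := pow_div_factorial_le_exp (N : ℝ) (by positivity) N
    rwa [div_le_iff₀ (by positivity), mul_comm] at this
  have := log_le_log (by positivity) h
  rw [log_mul (by positivity) (by positivity), log_exp, log_pow] at this
  rw [sum_Icc_log_eq_log_factorial]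
  linarith

lemma sum_Icc_sum_divisors {M : Type*} [AddCommMonoid M] (N : ℕ) (F : ℕ → ℕ → M) :
    ∑ n ∈ Icc 1 N, ∑ d ∈ n.divisors, F d (n / d) =
      ∑ d ∈ Icc 1 N, ∑ m ∈ Icc 1 (N / d), F d m := by
  rw [sum_sigma', sum_sigma']
  refine sum_nbij' (fun s => ⟨s.2, s.1 / s.2⟩) (fun s => ⟨s.1 * s.2, s.1⟩) ?_ ?_ ?_ ?_ ?_
  · rintro ⟨n, d⟩ hs
    simp only [mem_sigma, mem_Icc, Nat.mem_divisors] at hs ⊢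
    obtain ⟨⟨hn, hnN⟩, hd, -⟩ := hs
    have hdn := Nat.le_of_dvd (by omega) hd
    have hd0 := Nat.pos_of_dvd_of_pos hd (by omega)
    exact ⟨⟨hd0, hdn.trans hnN⟩, (Nat.one_le_div_iff hd0).2 hdn, Nat.div_le_div_right hnN⟩
  · rintro ⟨d, m⟩ hs
    simp only [mem_sigma, mem_Icc, Nat.mem_divisors] at hs ⊢
    obtain ⟨⟨hd, -⟩, hm, hmN⟩ := hs
    have := (Nat.le_div_iff_mul_le (by omega)).1 hmN
    exact ⟨⟨Nat.one_le_iff_ne_zero.2 (by positivity), by linarith⟩, dvd_mul_right d m,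
      by positivity⟩
  · rintro ⟨n, d⟩ hs
    simp only [mem_sigma, mem_Icc, Nat.mem_divisors] at hs
    simp [Nat.mul_div_cancel' hs.2.1]
  · rintro ⟨d, m⟩ hs
    simp only [mem_sigma, mem_Icc] at hs
    simp [Nat.mul_div_cancel_left m (show 0 < d by omega)]
  · intro _ _; rfl

lemma sum_Icc_log_eq_sum_vonMangoldt_mul (N : ℕ) :
    ∑ m ∈ Icc 1 N, log m = ∑ d ∈ Icc 1 N, Λ d * (N / d : ℕ) := by
  simp_rw [← vonMangoldt_sum, sum_Icc_sum_divisors N fun d _ => Λ d, sum_const, Nat.card_Icc,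
    nsmul_eq_mul, add_tsub_cancel_right, mul_comm]

lemma sum_vonMangoldt_div_not_prime_le (N : ℕ) :
    ∑ d ∈ Icc 1 N with ¬ d.Prime, Λ d / d ≤ 2 := by
  set T := {p ∈ Icc 1 N | p.Prime} ×ˢ Icc 2 N
  have hinj : Set.InjOn (fun e : ℕ × ℕ => e.1 ^ e.2) T := by
    rintro ⟨p, k⟩ he ⟨q, l⟩ he' h
    simp only [T, mem_coe, mem_product, mem_filter, mem_Icc] at he he'
    change p ^ k = q ^ l at h
    obtain ⟨rfl, hkl⟩ := Nat.Prime.pow_inj (m := k - 1) (n := l - 1) he.1.2 he'.1.2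
      (by rwa [Nat.sub_add_cancel (by omega), Nat.sub_add_cancel (by omega)])
    simp only [Prod.mk.injEq, true_and]
    omega
  have hsupp : {d ∈ {d ∈ Icc 1 N | ¬ d.Prime} | Λ d / d ≠ 0} ⊆
      T.image fun e => e.1 ^ e.2 := by
    intro d hd
    simp only [mem_filter, mem_Icc, div_ne_zero_iff, vonMangoldt_ne_zero_iff] at hd
    obtain ⟨⟨⟨-, hdN⟩, hnp⟩, hpp, -⟩ := hd
    obtain ⟨p, k, hp, hk, rfl⟩ := (isPrimePow_nat_iff _).1 hpp
    have hk2 : 2 ≤ k := by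
      by_contra! h
      obtain rfl : k = 1 := by omega
      exact hnp (by simpa using hp)
    refine mem_image.2 ⟨(p, k), ?_, rfl⟩
    simp only [T, mem_product, mem_filter, mem_Icc]
    have hpk : p ≤ p ^ k := Nat.le_self_pow (by omega) p
    have hkp : k < p ^ k := (Nat.lt_two_pow_self).trans_le (Nat.pow_le_pow_left hp.two_le k)
    exact ⟨⟨⟨hp.one_lt.le, hpk.trans hdN⟩, hp⟩, hk2, by omega⟩
  calc ∑ d ∈ Icc 1 N with ¬ d.Prime, Λ d / d
      = ∑ d ∈ {d ∈ {d ∈ Icc 1 N | ¬ d.Prime} | Λ d / d ≠ 0}, Λ d / d :=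
        (sum_filter_ne_zero _).symm
    _ ≤ ∑ d ∈ T.image fun e => e.1 ^ e.2, Λ d / d :=
        sum_le_sum_of_subset_of_nonneg hsupp fun _ _ _ =>
          div_nonneg vonMangoldt_nonneg (Nat.cast_nonneg _)
    _ = ∑ p ∈ Icc 1 N with p.Prime, log p * ∑ k ∈ Icc 2 N, 1 / (p : ℝ) ^ k := by
        rw [sum_image hinj, sum_product]
        refine sum_congr rfl fun p hp => ?_
        rw [mul_sum]
        refine sum_congr rfl fun k hk => ?_
        rw [vonMangoldt_apply_pow (by have := (mem_Icc.1 hk).1; omega),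
          vonMangoldt_apply_prime (mem_filter.1 hp).2]
        push_cast; ring
    _ ≤ ∑ p ∈ Icc 1 N with p.Prime, log p / (p * (p - 1)) := by
        refine sum_le_sum fun p hp => ?_
        have hp := (mem_filter.1 hp).2
        rw [div_eq_mul_one_div]
        exact mul_le_mul_of_nonneg_left (sum_Icc_two_inv_pow_le (by exact_mod_cast hp.one_lt) N)
          (log_natCast_nonneg p)
    _ ≤ 2 := sum_primes_log_div_mul_sub_one_le N

lemma primesUpTo_natCast (N : ℕ) : primesUpTo N = {p ∈ Icc 1 N | p.Prime} := by
  rw [primesUpTo, Nat.floor_natCast]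

lemma primesUpTo_floor (y : ℝ) : primesUpTo ⌊y⌋₊ = primesUpTo y := by
  rw [primesUpTo_natCast, primesUpTo]

lemma primesUpTo_mono : Monotone primesUpTo := fun _ _ h =>
  filter_subset_filter _ (Icc_subset_Icc_right (Nat.floor_le_floor h))

lemma sum_primesUpTo_log_le {y : ℝ} (hy : 0 ≤ y) :
    ∑ p ∈ primesUpTo y, log p ≤ log 4 * y := by
  have : ∑ p ∈ primesUpTo y, log p = Chebyshev.theta y := by
    rw [Chebyshev.theta, primesUpTo, ← Finset.Icc_add_one_left_eq_Ioc, zero_add]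
  exact this ▸ Chebyshev.theta_le_log4_mul_x hy

lemma sum_primes_log_div_le_nat {N : ℕ} (hN : 1 ≤ N) :
    ∑ p ∈ Icc 1 N with p.Prime, log p / p ≤ log N + 2 := by
  have hN0 : (0 : ℝ) < N := by exact_mod_cast hN
  have hsum : N * ∑ p ∈ Icc 1 N with p.Prime, log p / p - ∑ p ∈ Icc 1 N with p.Prime, log p
      ≤ N * log N :=
    calc N * ∑ p ∈ Icc 1 N with p.Prime, log p / p - ∑ p ∈ Icc 1 N with p.Prime, log p
        = ∑ p ∈ Icc 1 N with p.Prime, log p * (N / p - 1) := by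
          rw [mul_sum, ← sum_sub_distrib]
          exact sum_congr rfl fun p _ => by ring
      _ ≤ ∑ p ∈ Icc 1 N with p.Prime, Λ p * (N / p : ℕ) := by
          refine sum_le_sum fun p hp => ?_
          have hp := (mem_filter.1 hp).2
          rw [vonMangoldt_apply_prime hp]
          refine mul_le_mul_of_nonneg_left ?_ (log_natCast_nonneg p)
          have := Nat.lt_div_mul_add (a := N) hp.pos
          rw [div_sub_one (by exact_mod_cast hp.ne_zero), div_le_iff₀ (by exact_mod_cast hp.pos)]
          have : (N : ℝ) < (N / p : ℕ) * p + p := by exact_mod_cast this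
          linarith
      _ ≤ ∑ d ∈ Icc 1 N, Λ d * (N / d : ℕ) :=
          sum_le_sum_of_subset_of_nonneg (filter_subset _ _) fun _ _ _ =>
            mul_nonneg vonMangoldt_nonneg (Nat.cast_nonneg _)
      _ = ∑ m ∈ Icc 1 N, log m := (sum_Icc_log_eq_sum_vonMangoldt_mul N).symm
      _ ≤ N * log N := sum_Icc_log_le N
  have htheta := sum_primesUpTo_log_le (y := N) hN0.le
  rw [primesUpTo_natCast] at htheta
  have : N * ∑ p ∈ Icc 1 N with p.Prime, log p / p ≤ N * (log N + 2) := by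
    nlinarith [log_four_lt_three_halves]
  exact le_of_mul_le_mul_left this hN0

lemma log_sub_le_sum_primes_log_div_nat (N : ℕ) :
    log N - 3 ≤ ∑ p ∈ Icc 1 N with p.Prime, log p / p := by
  rcases N.eq_zero_or_pos with rfl | hN
  · simp
  have hN0 : (0 : ℝ) < N := by exact_mod_cast hN
  have : N * (log N - 1) ≤ N * (∑ p ∈ Icc 1 N with p.Prime, log p / p + 2) :=
    calc N * (log N - 1) ≤ ∑ m ∈ Icc 1 N, log m := by linarith [mul_log_sub_le_sum_Icc_log N]
      _ = ∑ d ∈ Icc 1 N, Λ d * (N / d : ℕ) := sum_Icc_log_eq_sum_vonMangoldt_mul N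
      _ ≤ N * ∑ d ∈ Icc 1 N, Λ d / d := by
          rw [mul_sum]
          refine sum_le_sum fun d _ => ?_
          rw [mul_comm, mul_div_assoc', mul_div_right_comm]
          exact mul_le_mul_of_nonneg_right Nat.cast_div_le vonMangoldt_nonneg
      _ = N * (∑ p ∈ Icc 1 N with p.Prime, log p / p +
            ∑ d ∈ Icc 1 N with ¬ d.Prime, Λ d / d) := by
          rw [← sum_filter_add_sum_filter_not (Icc 1 N) Nat.Prime]
          congr 2
          exact sum_congr rfl fun p hp => by rw [vonMangoldt_apply_prime (mem_filter.1 hp).2]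
      _ ≤ N * (∑ p ∈ Icc 1 N with p.Prime, log p / p + 2) := by
          gcongr
          exact sum_vonMangoldt_div_not_prime_le N
  have := le_of_mul_le_mul_left this hN0
  linarith

lemma sum_primesUpTo_log_div_le {y : ℝ} (hy : 1 ≤ y) :
    ∑ p ∈ primesUpTo y, log p / p ≤ log y + 2 := by
  have hN : 1 ≤ ⌊y⌋₊ := Nat.one_le_floor_iff _ |>.2 hy
  have := sum_primes_log_div_le_nat hN
  rw [← primesUpTo_floor, primesUpTo_natCast]
  linarith [log_le_log (by positivity) (Nat.floor_le (by linarith) : (⌊y⌋₊ : ℝ) ≤ y)]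

lemma log_sub_le_sum_primesUpTo_log_div {y : ℝ} (hy : 1 ≤ y) :
    log y - 4 ≤ ∑ p ∈ primesUpTo y, log p / p := by
  have hN : (1 : ℝ) ≤ ⌊y⌋₊ := by exact_mod_cast Nat.one_le_floor_iff _ |>.2 hy
  have := log_sub_le_sum_primes_log_div_nat ⌊y⌋₊
  rw [← primesUpTo_floor, primesUpTo_natCast]
  have hy2 : y ≤ 2 * ⌊y⌋₊ := by linarith [Nat.lt_floor_add_one y]
  have := log_le_log (by linarith) hy2
  rw [log_mul (by norm_num) (by positivity)] at this
  linarith [log_two_lt_d9]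

/-! ## Chebyshev's identity for `S(y) log y` -/

noncomputable def partialSum (f : ℕ → ℂ) (y : ℝ) : ℂ := ∑ n ∈ Icc 1 ⌊y⌋₊, f n

variable {f : ℕ → ℂ}

lemma norm_sum_Icc_le (hb : ∀ n, ‖f n‖ ≤ 1) (M : ℕ) :
    ‖∑ n ∈ Icc 1 M, f n‖ ≤ M := by
  simpa using (norm_sum_le _ _).trans (sum_le_sum fun n (_ : n ∈ Icc 1 M) => hb n)

lemma norm_partialSum_le (hb : ∀ n, ‖f n‖ ≤ 1) {y : ℝ} (hy : 0 ≤ y) :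
    ‖partialSum f y‖ ≤ y :=
  (norm_sum_Icc_le hb _).trans (Nat.floor_le hy)

lemma partialSum_div_natCast (y : ℝ) (q : ℕ) :
    partialSum f (y / q) = ∑ m ∈ Icc 1 (⌊y⌋₊ / q), f m := by
  rw [partialSum, Nat.floor_div_natCast]

lemma norm_partialSum_mul_log_sub_le (hb : ∀ n, ‖f n‖ ≤ 1) {y : ℝ} (hy : 1 ≤ y) :
    ‖partialSum f y * log y - ∑ n ∈ Icc 1 ⌊y⌋₊, f n * log n‖ ≤ y := by
  set N := ⌊y⌋₊
  have hN : (1 : ℝ) ≤ N := by exact_mod_cast Nat.one_le_floor_iff _ |>.2 hy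
  have hNy : (N : ℝ) ≤ y := Nat.floor_le (by linarith)
  have hterm : ∀ n ∈ Icc 1 N, ‖f n * log y - f n * log n‖ ≤ log y - log n := by
    intro n hn
    have hny : (n : ℝ) ≤ y := le_trans (by exact_mod_cast (mem_Icc.1 hn).2) hNy
    have hn : (1 : ℝ) ≤ n := by exact_mod_cast (mem_Icc.1 hn).1
    have hlog := log_le_log (by linarith) hny
    rw [← mul_sub, norm_mul, ← Complex.ofReal_sub, Complex.norm_real, Real.norm_eq_abs,
      abs_of_nonneg (by linarith)]
    exact mul_le_of_le_one_left (by linarith) (hb n)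
  have hlogy : N * (log y - log N) ≤ y - N := by
    rw [← log_div (by linarith) (by linarith)]
    have := mul_le_mul_of_nonneg_left (log_le_sub_one_of_pos (by positivity : 0 < y / N))
      (by linarith : (0 : ℝ) ≤ N)
    rwa [mul_sub, mul_div_cancel₀ _ (by positivity), mul_one] at this
  calc ‖partialSum f y * log y - ∑ n ∈ Icc 1 N, f n * log n‖
      ≤ ∑ n ∈ Icc 1 N, (log y - log n) := by
        rw [partialSum, sum_mul, ← sum_sub_distrib]
        exact (norm_sum_le _ _).trans (sum_le_sum hterm)
    _ = N * log y - ∑ n ∈ Icc 1 N, log n := by simp [sum_sub_distrib]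
    _ ≤ y := by linarith [mul_log_sub_le_sum_Icc_log N]

lemma sum_mul_log_eq_sum_vonMangoldt (N : ℕ) :
    ∑ n ∈ Icc 1 N, f n * log n =
      ∑ d ∈ Icc 1 N, ∑ m ∈ Icc 1 (N / d), (Λ d : ℂ) * f (d * m) := by
  rw [← sum_Icc_sum_divisors N fun d m => (Λ d : ℂ) * f (d * m)]
  refine sum_congr rfl fun n _ => ?_
  rw [← vonMangoldt_sum, Complex.ofReal_sum, mul_sum]
  refine sum_congr rfl fun d hd => ?_
  rw [Nat.mul_div_cancel' (Nat.mem_divisors.1 hd).1, mul_comm]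

lemma norm_sum_mul_prime_sub_le (hmult : ∀ m n, Nat.Coprime m n → f (m * n) = f m * f n)
    (hb : ∀ n, ‖f n‖ ≤ 1) {q : ℕ} (hq : q.Prime) (M : ℕ) :
    ‖∑ m ∈ Icc 1 M, f (q * m) - f q * ∑ m ∈ Icc 1 M, f m‖ ≤ 2 * (M / q : ℕ) := by
  have hvanish : ∀ m ∈ Icc 1 M, f (q * m) - f q * f m ≠ 0 → q ∣ m := fun m _ hne => by
    by_contra hdvd
    exact hne (by rw [hmult q m ((Nat.Prime.coprime_iff_not_dvd hq).2 hdvd), sub_self])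
  have hcard : #{m ∈ Icc 1 M | q ∣ m} = M / q := by
    rw [← zero_add 1, Finset.Icc_add_one_left_eq_Ioc, Nat.Ioc_filter_dvd_card_eq_div]
  have hterm : ∀ m, ‖f (q * m) - f q * f m‖ ≤ 2 := fun m => by
    refine (norm_sub_le _ _).trans ?_
    rw [norm_mul]
    nlinarith [hb (q * m), hb q, hb m, norm_nonneg (f q), norm_nonneg (f m)]
  calc ‖∑ m ∈ Icc 1 M, f (q * m) - f q * ∑ m ∈ Icc 1 M, f m‖
      = ‖∑ m ∈ Icc 1 M with q ∣ m, (f (q * m) - f q * f m)‖ := by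
        rw [mul_sum, ← sum_sub_distrib, sum_filter_of_ne hvanish]
    _ ≤ ∑ m ∈ Icc 1 M with q ∣ m, 2 :=
        (norm_sum_le _ _).trans (sum_le_sum fun m _ => hterm m)
    _ = 2 * (M / q : ℕ) := by rw [sum_const, hcard, nsmul_eq_mul, mul_comm]

lemma norm_sum_vonMangoldt_sub_sum_primes_le
    (hmult : ∀ m n, Nat.Coprime m n → f (m * n) = f m * f n) (hb : ∀ n, ‖f n‖ ≤ 1)
    (N : ℕ) :
    ‖∑ d ∈ Icc 1 N, ∑ m ∈ Icc 1 (N / d), (Λ d : ℂ) * f (d * m) -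
      ∑ q ∈ Icc 1 N with q.Prime, (log q : ℂ) * f q * ∑ m ∈ Icc 1 (N / q), f m‖
      ≤ 6 * N := by
  have hprime : ∀ q ∈ {q ∈ Icc 1 N | q.Prime},
      ‖∑ m ∈ Icc 1 (N / q), (Λ q : ℂ) * f (q * m) -
        (log q : ℂ) * f q * ∑ m ∈ Icc 1 (N / q), f m‖
        ≤ 2 * N * (log q / (q * (q - 1))) := fun q hq => by
    have hq := (mem_filter.1 hq).2
    have hq1 : (1 : ℝ) < q := by exact_mod_cast hq.one_lt
    have hdiv : ((N / q / q : ℕ) : ℝ) ≤ N / (q * (q - 1)) :=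
      calc ((N / q / q : ℕ) : ℝ) ≤ N / q / q :=
            Nat.cast_div_le.trans (by gcongr; exact Nat.cast_div_le)
        _ ≤ N / (q * (q - 1)) := by rw [div_div]; gcongr; linarith
    rw [vonMangoldt_apply_prime hq, ← mul_sum, mul_assoc, ← mul_sub, norm_mul,
      Complex.norm_real, norm_of_nonneg (log_natCast_nonneg q)]
    calc log q * ‖∑ m ∈ Icc 1 (N / q), f (q * m) - f q * ∑ m ∈ Icc 1 (N / q), f m‖
        ≤ log q * (2 * (N / q / q : ℕ)) :=
          mul_le_mul_of_nonneg_left (norm_sum_mul_prime_sub_le hmult hb hq _) (log_natCast_nonneg q)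
      _ ≤ log q * (2 * (N / (q * (q - 1)))) := by gcongr
      _ = 2 * N * (log q / (q * (q - 1))) := by ring
  have hnonprime : ∀ d ∈ Icc 1 N,
      ‖∑ m ∈ Icc 1 (N / d), (Λ d : ℂ) * f (d * m)‖ ≤ N * (Λ d / d) :=
    fun d _ => by
      rw [← mul_sum, norm_mul, Complex.norm_real, norm_of_nonneg vonMangoldt_nonneg]
      calc Λ d * ‖∑ m ∈ Icc 1 (N / d), f (d * m)‖ ≤ Λ d * (N / d : ℕ) :=
            mul_le_mul_of_nonneg_left (norm_sum_Icc_le (fun m => hb (d * m)) _) vonMangoldt_nonneg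
        _ ≤ Λ d * (N / d) := mul_le_mul_of_nonneg_left Nat.cast_div_le vonMangoldt_nonneg
        _ = N * (Λ d / d) := by ring
  rw [← sum_filter_add_sum_filter_not (Icc 1 N) Nat.Prime, add_sub_right_comm,
    ← sum_sub_distrib]
  calc _ ≤ ∑ q ∈ Icc 1 N with q.Prime, 2 * N * (log q / (q * (q - 1))) +
        ∑ d ∈ Icc 1 N with ¬ d.Prime, N * (Λ d / d) :=
        (norm_add_le _ _).trans (add_le_add ((norm_sum_le _ _).trans (sum_le_sum hprime))
          ((norm_sum_le _ _).trans (sum_le_sum fun d hd => hnonprime d (mem_filter.1 hd).1)))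
    _ ≤ 2 * N * 2 + N * 2 := by
        rw [← mul_sum, ← mul_sum]
        gcongr
        · exact sum_primes_log_div_mul_sub_one_le N
        · exact sum_vonMangoldt_div_not_prime_le N
    _ = 6 * N := by ring

lemma norm_partialSum_mul_log_sub_sum_primes_le
    (hmult : ∀ m n, Nat.Coprime m n → f (m * n) = f m * f n) (hb : ∀ n, ‖f n‖ ≤ 1)
    {y : ℝ} (hy : 1 ≤ y) :
    ‖partialSum f y * log y -
      ∑ q ∈ primesUpTo y, (log q : ℂ) * f q * partialSum f (y / q)‖
      ≤ 7 * y := by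
  have hN : (⌊y⌋₊ : ℝ) ≤ y := Nat.floor_le (by linarith)
  have h1 := norm_partialSum_mul_log_sub_le hb hy
  have h2 := norm_sum_vonMangoldt_sub_sum_primes_le hmult hb ⌊y⌋₊
  rw [← sum_mul_log_eq_sum_vonMangoldt] at h2
  simp_rw [partialSum_div_natCast]
  rw [primesUpTo]
  calc _ ≤ y + 6 * ⌊y⌋₊ :=
        (norm_sub_le_norm_sub_add_norm_sub _ _ _).trans (add_le_add h1 h2)
    _ ≤ 7 * y := by linarith

/-! ## The blocks `P_k` -/

noncomputable def trimmedPrimes (x : ℝ) : Finset ℕ :=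
  {p ∈ primesUpTo x | (log x) ^ 4 < p ∧ p ≤ x / 2}

lemma two_le_div_of_mem_trimmedPrimes {x : ℝ} {p : ℕ} (hp : p ∈ trimmedPrimes x) :
    2 ≤ x / p := by
  simp only [trimmedPrimes, primesUpTo, mem_filter] at hp
  have hp0 : (0 : ℝ) < p := by exact_mod_cast hp.1.2.pos
  rw [le_div_iff₀ hp0]; linarith

lemma log_two_le_log_div_of_mem_trimmedPrimes {x : ℝ} {p : ℕ} (hp : p ∈ trimmedPrimes x) :
    log 2 ≤ log (x / p) :=
  log_le_log (by norm_num) (two_le_div_of_mem_trimmedPrimes hp)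

lemma log_div_lt_log_of_mem_trimmedPrimes {x : ℝ} {p : ℕ} (hp : p ∈ trimmedPrimes x) :
    log (x / p) < log x := by
  simp only [trimmedPrimes, primesUpTo, mem_filter] at hp
  have hp1 : (1 : ℝ) < p := by exact_mod_cast hp.1.2.one_lt
  have hx : 0 < x := by linarith
  exact log_lt_log (by positivity) (div_lt_self hx hp1)

lemma rpow_one_sub_lt_iff {x p a : ℝ} (hx : 1 < x) (hp : 0 < p) :
    x ^ (1 - a) < p ↔ log (x / p) / log x < a := by
  rw [rpow_lt_iff_lt_log (by linarith) hp, div_lt_iff₀ (log_pos hx), log_div (by linarith) hp.ne']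
  constructor <;> intro h <;> linarith

lemma le_rpow_one_sub_iff {x p a : ℝ} (hx : 1 < x) (hp : 0 < p) :
    p ≤ x ^ (1 - a) ↔ a ≤ log (x / p) / log x := by
  rw [← not_lt, rpow_one_sub_lt_iff hx hp, not_lt]

lemma mem_Pk_iff {x : ℝ} (hx : 1 < x) {k p : ℕ} :
    p ∈ Pk x k ↔ p ∈ trimmedPrimes x ∧
      exp (-k) ≤ log (x / p) / log x ∧ log (x / p) / log x < exp (1 - k) := by
  simp only [Pk, trimmedPrimes, primesUpTo, mem_filter]
  constructor
  · rintro ⟨hI, hp, h4, h2, hlo, hhi⟩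
    have hp0 : (0 : ℝ) < p := by exact_mod_cast hp.pos
    exact ⟨⟨⟨hI, hp⟩, h4, h2⟩, (le_rpow_one_sub_iff hx hp0).1 hhi,
      (rpow_one_sub_lt_iff hx hp0).1 hlo⟩
  · rintro ⟨⟨⟨hI, hp⟩, h4, h2⟩, hlo, hhi⟩
    have hp0 : (0 : ℝ) < p := by exact_mod_cast hp.pos
    exact ⟨hI, hp, h4, h2, (rpow_one_sub_lt_iff hx hp0).2 hhi,
      (le_rpow_one_sub_iff hx hp0).2 hlo⟩

lemma ceil_neg_log_eq_iff {t : ℝ} (ht : 0 < t) {k : ℕ} (hk : 1 ≤ k) :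
    ⌈-log t⌉₊ = k ↔ exp (-k) ≤ t ∧ t < exp (1 - k) := by
  rw [Nat.ceil_eq_iff (by omega), Nat.cast_sub hk, ← log_lt_iff_lt_exp ht,
    ← le_log_iff_exp_le ht, Nat.cast_one, and_comm]
  constructor <;> rintro ⟨h1, h2⟩ <;> constructor <;> linarith

lemma ceil_neg_log_mem_Icc {x : ℝ} (hx : 16 ≤ x) {p : ℕ} (hp : p ∈ trimmedPrimes x) :
    ⌈-log (log (x / p) / log x)⌉₊ ∈ Icc 1 (⌈log (log x)⌉₊ + 1) := by
  have hlogx : 0 < log x := log_pos (by linarith)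
  have hlog2 := log_two_le_log_div_of_mem_trimmedPrimes hp
  have hlog2_pos : 0 < log 2 := log_pos one_lt_two
  have hupper : -log (log (x / p) / log x) ≤ log (log x) + 1 := by
    rw [← log_inv, inv_div]
    calc log (log x / log (x / p)) ≤ log (log x / log 2) :=
          log_le_log (div_pos hlogx (hlog2_pos.trans_le hlog2))
            (div_le_div_of_nonneg_left hlogx.le hlog2_pos hlog2)
      _ = log (log x) - log (log 2) := log_div hlogx.ne' hlog2_pos.ne'
      _ ≤ log (log x) + 1 := by linarith [neg_log_log_two_le_one]
  refine mem_Icc.2 ⟨Nat.one_le_iff_ne_zero.2 fun h => ?_, ?_⟩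
  · rw [Nat.ceil_eq_zero, neg_nonpos] at h
    exact (log_neg (div_pos (hlog2_pos.trans_le hlog2) hlogx)
      ((div_lt_one hlogx).2 (log_div_lt_log_of_mem_trimmedPrimes hp))).not_ge h
  · calc ⌈-log (log (x / p) / log x)⌉₊ ≤ ⌈log (log x) + 1⌉₊ :=
          Nat.ceil_le_ceil hupper
      _ ≤ ⌈log (log x)⌉₊ + 1 := by simpa using Nat.ceil_add_le (log (log x)) 1

lemma sum_trimmedPrimes_eq_sum_Pk {M : Type*} [AddCommMonoid M] {x : ℝ} (hx : 16 ≤ x)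
    (F : ℕ → M) :
    ∑ p ∈ trimmedPrimes x, F p =
      ∑ k ∈ Icc 1 (⌈log (log x)⌉₊ + 1), ∑ p ∈ Pk x k, F p := by
  -- `p ∈ P_k` exactly when `k = ⌈-log (log (x / p) / log x)⌉₊`
  rw [← sum_fiberwise_of_maps_to (fun p hp => ceil_neg_log_mem_Icc hx hp)]
  refine sum_congr rfl fun k hk => sum_congr (ext fun p => ?_) fun _ _ => rfl
  rw [mem_filter, mem_Pk_iff (by linarith)]
  refine and_congr_right fun hp => ceil_neg_log_eq_iff (div_pos ?_ (log_pos (by linarith)))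
    (mem_Icc.1 hk).1
  exact (log_pos one_lt_two).trans_le (log_two_le_log_div_of_mem_trimmedPrimes hp)

lemma norm_log_mul_mul_partialSum_le (hb : ∀ n, ‖f n‖ ≤ 1) {x : ℝ} (hx : 0 ≤ x)
    (p : ℕ) :
    ‖(log p : ℂ) * f p * partialSum f (x / p)‖ ≤ log p * (x / p) := by
  rw [norm_mul, norm_mul, Complex.norm_real, norm_of_nonneg (log_natCast_nonneg p)]
  calc log p * ‖f p‖ * ‖partialSum f (x / p)‖ ≤ log p * 1 * (x / p) := by
        gcongr
        · exact hb p
        · exact norm_partialSum_le hb (by positivity)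
    _ = log p * (x / p) := by ring

lemma sum_primesUpTo_sdiff_trimmedPrimes_le {x : ℝ} (hx : 16 ≤ x) :
    ∑ p ∈ primesUpTo x \ trimmedPrimes x, log p * (x / p) ≤ x * (4 * log (log x) + 5) := by
  set D := primesUpTo x \ trimmedPrimes x
  have hL : 1 ≤ (log x) ^ 4 := one_le_pow₀ (by linarith [exp_one_le_log hx, add_one_le_exp 1])
  have hnonneg : ∀ p : ℕ, 0 ≤ log p * (x / p) := fun p => by
    have := log_natCast_nonneg p; positivity
  have hsmall : ∑ p ∈ D.filter fun p : ℕ => (p : ℝ) ≤ (log x) ^ 4, log p * (x / p)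
      ≤ x * (4 * log (log x) + 2) :=
    calc ∑ p ∈ D.filter fun p : ℕ => (p : ℝ) ≤ (log x) ^ 4, log p * (x / p)
        ≤ ∑ p ∈ primesUpTo ((log x) ^ 4), log p * (x / p) := by
          refine sum_le_sum_of_subset_of_nonneg (fun p hp => ?_) fun p _ _ => hnonneg p
          simp only [D, trimmedPrimes, primesUpTo, mem_filter, mem_sdiff, mem_Icc] at hp ⊢
          exact ⟨⟨hp.1.1.1.1, Nat.le_floor hp.2⟩, hp.1.1.2⟩
      _ = x * ∑ p ∈ primesUpTo ((log x) ^ 4), log p / p := by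
          rw [mul_sum]; exact sum_congr rfl fun p _ => by ring
      _ ≤ x * (4 * log (log x) + 2) := by
          gcongr
          simpa [log_pow] using sum_primesUpTo_log_div_le hL
  have hlarge : ∑ p ∈ D.filter fun p : ℕ => ¬ (p : ℝ) ≤ (log x) ^ 4, log p * (x / p)
      ≤ 3 * x :=
    calc ∑ p ∈ D.filter fun p : ℕ => ¬ (p : ℝ) ≤ (log x) ^ 4, log p * (x / p)
        ≤ ∑ p ∈ primesUpTo x, 2 * log p := by
          refine (sum_le_sum fun p hp => ?_).trans
            (sum_le_sum_of_subset_of_nonneg ((filter_subset _ _).trans sdiff_subset)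
              fun p _ _ => mul_nonneg zero_le_two (log_natCast_nonneg p))
          simp only [D, trimmedPrimes, primesUpTo, mem_filter, mem_sdiff, not_and, not_le] at hp
          have hp0 : (0 : ℝ) < p := by exact_mod_cast hp.1.1.2.pos
          have hx2 : x / p < 2 := by
            rw [div_lt_iff₀ hp0]; linarith [hp.1.2 hp.1.1 hp.2]
          nlinarith [log_natCast_nonneg p]
      _ ≤ 2 * (log 4 * x) := by
          rw [← mul_sum]; gcongr; exact sum_primesUpTo_log_le (by linarith)
      _ ≤ 3 * x := by nlinarith [log_four_lt_three_halves]
  rw [← sum_filter_add_sum_filter_not D fun p : ℕ => (p : ℝ) ≤ (log x) ^ 4]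
  linarith

lemma norm_partialSum_mul_log_sub_sum_trimmedPrimes_le
    (hmult : ∀ m n, Nat.Coprime m n → f (m * n) = f m * f n) (hb : ∀ n, ‖f n‖ ≤ 1)
    {x : ℝ} (hx : 16 ≤ x) :
    ‖partialSum f x * log x -
      ∑ p ∈ trimmedPrimes x, (log p : ℂ) * f p * partialSum f (x / p)‖
      ≤ 16 * (x * log (log x)) := by
  have hsub : trimmedPrimes x ⊆ primesUpTo x := filter_subset _ _
  have hD :
      ‖∑ p ∈ primesUpTo x \ trimmedPrimes x, (log p : ℂ) * f p * partialSum f (x / p)‖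
      ≤ x * (4 * log (log x) + 5) :=
    (norm_sum_le _ _).trans ((sum_le_sum fun p _ => norm_log_mul_mul_partialSum_le hb
      (by linarith) p).trans (sum_primesUpTo_sdiff_trimmedPrimes_le hx))
  rw [sum_sdiff_eq_sub hsub] at hD
  have := norm_partialSum_mul_log_sub_sum_primes_le hmult hb (by linarith : 1 ≤ x)
  have hllx := one_le_log_log hx
  calc _ ≤ 7 * x + x * (4 * log (log x) + 5) :=
        (norm_sub_le_norm_sub_add_norm_sub _ _ _).trans (add_le_add this hD)
    _ ≤ 16 * (x * log (log x)) := by nlinarith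

lemma sum_Pk_log_div_le {x : ℝ} (hx : 1 ≤ x) {k : ℕ} (hk : 1 ≤ k) :
    ∑ p ∈ Pk x k, log p / p ≤ (exp (1 - k) - exp (-k)) * log x + 6 := by
  set A := x ^ (1 - exp (1 - (k : ℝ)))
  set B := x ^ (1 - exp (-(k : ℝ)))
  have hk' : (1 : ℝ) ≤ k := by exact_mod_cast hk
  have hA : 1 ≤ A :=
    one_le_rpow hx (by linarith [exp_le_one_iff.2 (by linarith : 1 - (k : ℝ) ≤ 0)])
  have hAB : A ≤ B := rpow_le_rpow_of_exponent_le hx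
    (by linarith [exp_le_exp.2 (by linarith : -(k : ℝ) ≤ 1 - k)])
  have hsub : Pk x k ⊆ primesUpTo B \ primesUpTo A := fun p hp => by
    simp only [Pk, primesUpTo, mem_filter, mem_sdiff, mem_Icc, not_and] at hp ⊢
    obtain ⟨-, hp, -, -, hlo, hhi⟩ := hp
    refine ⟨⟨⟨hp.one_lt.le, Nat.le_floor hhi⟩, hp⟩, fun h _ => ?_⟩
    linarith [(Nat.le_floor_iff (by linarith)).1 h.2]
  calc ∑ p ∈ Pk x k, log p / p ≤ ∑ p ∈ primesUpTo B \ primesUpTo A, log p / p :=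
        sum_le_sum_of_subset_of_nonneg hsub fun p _ _ => div_nonneg (log_natCast_nonneg p)
          (Nat.cast_nonneg p)
    _ = ∑ p ∈ primesUpTo B, log p / p - ∑ p ∈ primesUpTo A, log p / p :=
        sum_sdiff_eq_sub (primesUpTo_mono hAB)
    _ ≤ (log B + 2) - (log A - 4) :=
        sub_le_sub (sum_primesUpTo_log_div_le (hA.trans hAB)) (log_sub_le_sum_primesUpTo_log_div hA)
    _ = (exp (1 - k) - exp (-k)) * log x + 6 := by
        rw [log_rpow (by linarith), log_rpow (by linarith)]; ring

lemma Sk_eq (x : ℝ) (k : ℕ) :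
    Sk f x k = ∑ p ∈ Pk x k, (f p * log p / log (x / p) : ℂ) *
      ∑ q ∈ primesUpTo (x / p), (log q : ℂ) * f q * partialSum f (x / p / q) := by
  refine sum_congr rfl fun p _ => ?_
  rw [mul_sum]
  refine sum_congr rfl fun q _ => ?_
  rw [partialSum, div_div, mul_sum, mul_sum]
  exact sum_congr rfl fun n _ => by ring

lemma norm_sum_Pk_sub_Sk_le (hmult : ∀ m n, Nat.Coprime m n → f (m * n) = f m * f n)
    (hb : ∀ n, ‖f n‖ ≤ 1) {x : ℝ} (hx : 1 < x) (k : ℕ) :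
    ‖∑ p ∈ Pk x k, (log p : ℂ) * f p * partialSum f (x / p) - Sk f x k‖
      ≤ 7 * x * exp k / log x * ∑ p ∈ Pk x k, log p / p := by
  rw [Sk_eq, ← sum_sub_distrib, mul_sum]
  refine (norm_sum_le _ _).trans (sum_le_sum fun p hp => ?_)
  obtain ⟨hpT, hlo, -⟩ := (mem_Pk_iff hx).1 hp
  have hy := two_le_div_of_mem_trimmedPrimes hpT
  have hlogx : 0 < log x := log_pos hx
  have hlogy : 0 < log (x / p) := log_pos (by linarith)
  have hlogy' : exp (-k) * log x ≤ log (x / p) := (le_div_iff₀ hlogx).1 hlo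
  have hp0 : (0 : ℝ) < p := by
    simp only [trimmedPrimes, primesUpTo, mem_filter] at hpT; exact_mod_cast hpT.1.2.pos
  set W := ∑ q ∈ primesUpTo (x / p), (log q : ℂ) * f q * partialSum f (x / p / q)
  have hsplit : (log p : ℂ) * f p * partialSum f (x / p) - (f p * log p / log (x / p) : ℂ) * W
      = (f p * log p / log (x / p) : ℂ) * (partialSum f (x / p) * log (x / p) - W) := by
    have : (log (x / p) : ℂ) ≠ 0 := Complex.ofReal_ne_zero.2 hlogy.ne'
    field_simp
  have hc : ‖(f p * log p / log (x / p) : ℂ)‖ ≤ log p / log (x / p) := by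
    rw [norm_div, norm_mul, Complex.norm_real, Complex.norm_real,
      norm_of_nonneg (log_natCast_nonneg p), norm_of_nonneg hlogy.le]
    exact div_le_div_of_nonneg_right (mul_le_of_le_one_left (log_natCast_nonneg p) (hb p))
      hlogy.le
  rw [hsplit, norm_mul]
  calc _ ≤ log p / log (x / p) * (7 * (x / p)) :=
        mul_le_mul hc (norm_partialSum_mul_log_sub_sum_primes_le hmult hb (by linarith))
          (norm_nonneg _) (div_nonneg (log_natCast_nonneg p) hlogy.le)
    _ ≤ log p / (exp (-k) * log x) * (7 * (x / p)) := by gcongr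
    _ = 7 * x * exp k / log x * (log p / p) := by
        rw [exp_neg]; field_simp

lemma exp_le_of_le_ceil_log_log {x : ℝ} (hx : 16 ≤ x) {k : ℕ}
    (hk : k ≤ ⌈log (log x)⌉₊ + 1) : exp k ≤ 8 * log x := by
  have hlogx : 0 < log x := (exp_pos 1).trans_le (exp_one_le_log hx)
  have hk' : (k : ℝ) ≤ log (log x) + 2 := by
    have := Nat.ceil_lt_add_one (by linarith [one_le_log_log hx] : 0 ≤ log (log x))
    have : (k : ℝ) ≤ ⌈log (log x)⌉₊ + 1 := by exact_mod_cast hk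
    linarith
  have he2 : exp 2 ≤ 8 := by
    rw [show (2 : ℝ) = 1 + 1 by norm_num, exp_add]; nlinarith [exp_one_lt_d9, exp_pos 1]
  calc exp k ≤ exp (log (log x) + 2) := exp_le_exp.2 hk'
    _ = log x * exp 2 := by rw [exp_add, exp_log hlogx]
    _ ≤ 8 * log x := by nlinarith

lemma norm_sum_Pk_sub_Sk_le_of_mem_Icc (hmult : ∀ m n, Nat.Coprime m n → f (m * n) = f m * f n)
    (hb : ∀ n, ‖f n‖ ≤ 1) {x : ℝ} (hx : 16 ≤ x) {k : ℕ}
    (hk : k ∈ Icc 1 (⌈log (log x)⌉₊ + 1)) :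
    ‖∑ p ∈ Pk x k, (log p : ℂ) * f p * partialSum f (x / p) - Sk f x k‖ ≤ 350 * x := by
  have hlogx : 0 < log x := (exp_pos 1).trans_le (exp_one_le_log hx)
  have hek : exp k / log x ≤ 8 :=
    (div_le_iff₀ hlogx).2 (exp_le_of_le_ceil_log_log hx (mem_Icc.1 hk).2)
  have h1 : exp (k : ℝ) * exp (1 - k) = exp 1 := by rw [← exp_add]; ring_nf
  have h2 : exp (k : ℝ) * exp (-k) = 1 := by rw [← exp_add]; simp
  calc _ ≤ 7 * x * exp k / log x * ((exp (1 - k) - exp (-k)) * log x + 6) :=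
        (norm_sum_Pk_sub_Sk_le hmult hb (by linarith) k).trans
          (mul_le_mul_of_nonneg_left (sum_Pk_log_div_le (by linarith) (mem_Icc.1 hk).1)
            (by positivity))
    _ = 7 * x * (exp 1 - 1) + 42 * x * (exp k / log x) := by
        rw [← h1, ← h2]; field_simp; ring
    _ ≤ 7 * x * 2 + 42 * x * 8 := by
        gcongr
        linarith [exp_one_lt_d9]
    _ = 350 * x := by ring

lemma norm_sum_trimmedPrimes_sub_sum_Sk_le
    (hmult : ∀ m n, Nat.Coprime m n → f (m * n) = f m * f n) (hb : ∀ n, ‖f n‖ ≤ 1)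
    {x : ℝ} (hx : 16 ≤ x) :
    ‖∑ p ∈ trimmedPrimes x, (log p : ℂ) * f p * partialSum f (x / p) -
      ∑ k ∈ Icc 1 (⌈log (log x)⌉₊ + 1), Sk f x k‖ ≤ 1050 * (x * log (log x)) := by
  have hllx := one_le_log_log hx
  have hK : ((⌈log (log x)⌉₊ + 1 : ℕ) : ℝ) ≤ 3 * log (log x) := by
    push_cast; linarith [Nat.ceil_lt_add_one (by linarith : 0 ≤ log (log x))]
  rw [sum_trimmedPrimes_eq_sum_Pk hx, ← sum_sub_distrib]
  calc _ ≤ ∑ k ∈ Icc 1 (⌈log (log x)⌉₊ + 1), 350 * x :=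
        (norm_sum_le _ _).trans
          (sum_le_sum fun k hk => norm_sum_Pk_sub_Sk_le_of_mem_Icc hmult hb hx hk)
    _ = ((⌈log (log x)⌉₊ + 1 : ℕ) : ℝ) * (350 * x) := by simp
    _ ≤ 3 * log (log x) * (350 * x) := by gcongr
    _ = 1050 * (x * log (log x)) := by ring

lemma norm_partialSum_le_sum_norm_Sk_add
    (hmult : ∀ m n, Nat.Coprime m n → f (m * n) = f m * f n) (hb : ∀ n, ‖f n‖ ≤ 1)
    {x : ℝ} (hx : 16 ≤ x) :
    ‖partialSum f x‖ ≤
      1066 * ((1 / log x) * ∑ k ∈ Icc 1 (⌈log (log x)⌉₊ + 1), ‖Sk f x k‖ +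
        x * log (log x) / log x) := by
  set K := ⌈log (log x)⌉₊ + 1
  set T := ∑ p ∈ trimmedPrimes x, (log p : ℂ) * f p * partialSum f (x / p)
  have hlogx : 0 < log x := (exp_pos 1).trans_le (exp_one_le_log hx)
  have h1 := norm_partialSum_mul_log_sub_sum_trimmedPrimes_le hmult hb hx
  have h2 := norm_sum_trimmedPrimes_sub_sum_Sk_le hmult hb hx
  have h3 : ‖∑ k ∈ Icc 1 K, Sk f x k‖ ≤ ∑ k ∈ Icc 1 K, ‖Sk f x k‖ :=
    norm_sum_le _ _
  have hSk : 0 ≤ ∑ k ∈ Icc 1 K, ‖Sk f x k‖ := sum_nonneg fun _ _ => norm_nonneg _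
  have hmain :
      ‖partialSum f x‖ * log x ≤
        ∑ k ∈ Icc 1 K, ‖Sk f x k‖ + 1066 * (x * log (log x)) := by
    have := norm_add₃_le (a := partialSum f x * log x - T) (b := T - ∑ k ∈ Icc 1 K, Sk f x k)
      (c := ∑ k ∈ Icc 1 K, Sk f x k)
    rw [sub_add_sub_cancel, sub_add_cancel, norm_mul, Complex.norm_real,
      norm_of_nonneg hlogx.le] at this
    linarith
  calc ‖partialSum f x‖
      ≤ (∑ k ∈ Icc 1 K, ‖Sk f x k‖ + 1066 * (x * log (log x))) / log x :=
        (le_div_iff₀ hlogx).2 hmain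
    _ ≤ (1066 * ∑ k ∈ Icc 1 K, ‖Sk f x k‖ + 1066 * (x * log (log x))) / log x := by
        gcongr; linarith
    _ = _ := by field_simp

theorem stmt18 :
    ∃ C : ℝ, ∃ K₀ : ℕ, 0 < C ∧ ∀ x : ℝ, 16 ≤ x →
      ∀ f : ℕ → ℂ, f 1 = 1 →
      (∀ m n : ℕ, Nat.Coprime m n → f (m * n) = f m * f n) →
      (∀ n : ℕ, ‖f n‖ ≤ 1) →
      ‖∑ n ∈ Finset.Icc 1 ⌊x⌋₊, f n‖ ≤
        C * ((1 / Real.log x) *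
              ∑ k ∈ Finset.Icc 1 (⌈Real.log (Real.log x)⌉₊ + K₀),
                ‖Sk f x k‖ +
            x * Real.log (Real.log x) / Real.log x) :=
  ⟨1066, 1, by norm_num, fun _ hx _ _ hmult hb =>
    norm_partialSum_le_sum_norm_Sk_add hmult hb hx⟩
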